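/- arXiv:1505.01669 — 5 statements merged into one kernel-verified Lean document; each statement's English description precedes it below -/
import Mathlib

section
/- Let C be a category with binary copowers (all coproducts A + A exist and C has an initial object 0). If every object A of C carries a counital comagma structure (δ_A : A → A + A, ε_A : A → 0) natural in A (i.e. δ_B ∘ f = (f + f) ∘ δ_A and ε_B ∘ f = ε_A for all f : A → B), then C is semi-additive. -/
open CategoryTheory CategoryTheory.Limits

universe v u

/-- A semi-additive structure on a category `C`: a commutative monoid structure on each
hom-set, preserved by composition on either side (composition is bilinear). -/
structure SemiAdditive (C : Type u) [Category.{v} C] where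
  add : ∀ {A B : C}, (A ⟶ B) → (A ⟶ B) → (A ⟶ B)
  zero : ∀ {A B : C}, A ⟶ B
  add_assoc : ∀ {A B : C} (f g h : A ⟶ B), add (add f g) h = add f (add g h)
  add_comm : ∀ {A B : C} (f g : A ⟶ B), add f g = add g f
  zero_add : ∀ {A B : C} (f : A ⟶ B), add zero f = f
  comp_add : ∀ {A B D : C} (f : A ⟶ B) (g h : B ⟶ D), f ≫ add g h = add (f ≫ g) (f ≫ h)
  add_comp : ∀ {A B D : C} (f g : A ⟶ B) (h : B ⟶ D), add f g ≫ h = add (f ≫ h) (g ≫ h)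
  comp_zero : ∀ {A B D : C} (f : A ⟶ B), f ≫ (zero : B ⟶ D) = (zero : A ⟶ D)
  zero_comp : ∀ {A B D : C} (f : B ⟶ D), (zero : A ⟶ B) ≫ f = (zero : A ⟶ D)

/-!
Define `f + g := δ_A ≫ [f, g]` and `0 := ε_A ≫ (O ⟶ B)`. Naturality of `ε` and initiality of `O`
make `0` absorbing on both sides, and naturality of `δ` makes precomposition additive;
postcomposition is additive for any `δ`. Counitality says `0` is a two-sided unit. Applying
additivity of precomposition with `δ_{A+A}` to a copairing of copairings yields the interchange
law `(w + x) + (y + z) = (w + y) + (x + z)`, so by Eckmann–Hilton `+` is commutative and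
associative.
-/

namespace NaturalComagma

variable {C : Type u} [Category.{v} C]

variable {O : C} (hO : IsInitial O) (ε : ∀ A : C, A ⟶ O)

def zero {A B : C} : A ⟶ B := ε A ≫ hO.to B

theorem zero_comp {A B D : C} (f : B ⟶ D) : zero hO ε ≫ f = (zero hO ε : A ⟶ D) := by
  rw [zero, zero, Category.assoc, hO.hom_ext (hO.to B ≫ f) (hO.to D)]

theorem comp_zero (hεnat : ∀ {A B : C} (f : A ⟶ B), f ≫ ε B = ε A) {A B D : C} (f : A ⟶ B) :
    f ≫ zero hO ε = (zero hO ε : A ⟶ D) := by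
  rw [zero, zero, ← Category.assoc, hεnat]

variable {cp : C → C} {i₁ i₂ : ∀ A : C, A ⟶ cp A}
  (hc : ∀ A : C, IsColimit (BinaryCofan.mk (i₁ A) (i₂ A)))

abbrev copair {A B : C} (f g : A ⟶ B) : cp A ⟶ B := BinaryCofan.IsColimit.desc (hc A) f g

theorem inl_copair {A B : C} (f g : A ⟶ B) : i₁ A ≫ copair hc f g = f :=
  BinaryCofan.IsColimit.inl_desc (hc A) f g

theorem inr_copair {A B : C} (f g : A ⟶ B) : i₂ A ≫ copair hc f g = g :=
  BinaryCofan.IsColimit.inr_desc (hc A) f g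

theorem copair_eta {A B : C} (u : cp A ⟶ B) : u = copair hc (i₁ A ≫ u) (i₂ A ≫ u) :=
  BinaryCofan.IsColimit.hom_ext (hc A) (inl_copair hc _ _).symm (inr_copair hc _ _).symm

theorem copair_comp {A B D : C} (f g : A ⟶ B) (h : B ⟶ D) :
    copair hc f g ≫ h = copair hc (f ≫ h) (g ≫ h) := by
  rw [copair_eta hc (copair hc f g ≫ h)]
  simp only [← Category.assoc, inl_copair, inr_copair]

variable (δ : ∀ A : C, A ⟶ cp A)

def add {A B : C} (f g : A ⟶ B) : A ⟶ B := δ A ≫ copair hc f g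

theorem add_comp {A B D : C} (f g : A ⟶ B) (h : B ⟶ D) :
    add hc δ f g ≫ h = add hc δ (f ≫ h) (g ≫ h) := by
  rw [add, add, Category.assoc, copair_comp]

theorem comp_add
    (hδnat : ∀ {A B : C} (f : A ⟶ B), f ≫ δ B = δ A ≫ copair hc (f ≫ i₁ B) (f ≫ i₂ B))
    {A B D : C} (f : A ⟶ B) (g h : B ⟶ D) :
    f ≫ add hc δ g h = add hc δ (f ≫ g) (f ≫ h) := by
  rw [add, add, ← Category.assoc, hδnat, Category.assoc, copair_comp, Category.assoc,
    Category.assoc, inl_copair, inr_copair]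

theorem add_add_add_comm
    (hδnat : ∀ {A B : C} (f : A ⟶ B), f ≫ δ B = δ A ≫ copair hc (f ≫ i₁ B) (f ≫ i₂ B))
    {A B : C} (w x y z : A ⟶ B) :
    add hc δ (add hc δ w x) (add hc δ y z) = add hc δ (add hc δ w y) (add hc δ x z) := by
  have hsplit : add hc δ (copair hc w y) (copair hc x z) =
      copair hc (add hc δ w x) (add hc δ y z) := by
    rw [copair_eta hc (add hc δ _ _), comp_add hc δ hδnat, comp_add hc δ hδnat]
    simp only [inl_copair, inr_copair]
  calc add hc δ (add hc δ w x) (add hc δ y z)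
      = δ A ≫ add hc δ (copair hc w y) (copair hc x z) := by rw [hsplit]; rfl
    _ = add hc δ (add hc δ w y) (add hc δ x z) := comp_add hc δ hδnat _ _ _

theorem zero_add (hcounit₁ : ∀ A : C, δ A ≫ copair hc (zero hO ε) (𝟙 A) = 𝟙 A)
    {A B : C} (f : A ⟶ B) : add hc δ (zero hO ε) f = f := by
  calc add hc δ (zero hO ε) f = δ A ≫ copair hc (zero hO ε ≫ f) (𝟙 A ≫ f) := by
        rw [zero_comp, Category.id_comp]; rfl
    _ = (δ A ≫ copair hc (zero hO ε) (𝟙 A)) ≫ f := by rw [Category.assoc, copair_comp]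
    _ = f := by rw [hcounit₁, Category.id_comp]

theorem add_zero (hcounit₂ : ∀ A : C, δ A ≫ copair hc (𝟙 A) (zero hO ε) = 𝟙 A)
    {A B : C} (f : A ⟶ B) : add hc δ f (zero hO ε) = f := by
  calc add hc δ f (zero hO ε) = δ A ≫ copair hc (𝟙 A ≫ f) (zero hO ε ≫ f) := by
        rw [zero_comp, Category.id_comp]; rfl
    _ = (δ A ≫ copair hc (𝟙 A) (zero hO ε)) ≫ f := by rw [Category.assoc, copair_comp]
    _ = f := by rw [hcounit₂, Category.id_comp]

end NaturalComagma

open NaturalComagma in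
/-- Let `C` be a category with binary copowers: an initial object `O` and, for each `A`,
a coproduct `cp A = A + A` with injections `i₁ A, i₂ A`.  If every object `A` carries a
counital comagma structure `(δ A : A ⟶ A + A, ε A : A ⟶ O)` natural in `A` — i.e.
composing `δ A` with the map `A + A ⟶ A` whose first (resp. second) component is `ε A`
followed by the unique map `O ⟶ A` and whose other component is the identity gives `𝟙 A`,
and `δ B ∘ f = (f + f) ∘ δ A`, `ε B ∘ f = ε A` for every `f : A ⟶ B` — then `C` is
semi-additive. -/
theorem semiAdditive_of_natural_comagma {C : Type u} [Category.{v} C]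
    (O : C) (hO : IsInitial O)
    (cp : C → C) (i₁ i₂ : ∀ A : C, A ⟶ cp A)
    (hc : ∀ A : C, IsColimit (BinaryCofan.mk (i₁ A) (i₂ A)))
    (δ : ∀ A : C, A ⟶ cp A) (ε : ∀ A : C, A ⟶ O)
    (hcounit₁ : ∀ A : C, δ A ≫ (hc A).desc (BinaryCofan.mk (ε A ≫ hO.to A) (𝟙 A)) = 𝟙 A)
    (hcounit₂ : ∀ A : C, δ A ≫ (hc A).desc (BinaryCofan.mk (𝟙 A) (ε A ≫ hO.to A)) = 𝟙 A)
    (hδnat : ∀ {A B : C} (f : A ⟶ B),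
      f ≫ δ B = δ A ≫ (hc A).desc (BinaryCofan.mk (f ≫ i₁ B) (f ≫ i₂ B)))
    (hεnat : ∀ {A B : C} (f : A ⟶ B), f ≫ ε B = ε A) :
    Nonempty (SemiAdditive C) := by
  have unital {A B : C} : EckmannHilton.IsUnital (add hc δ (A := A) (B := B)) (zero hO ε) :=
    { left_id := zero_add hO ε hc δ hcounit₁, right_id := add_zero hO ε hc δ hcounit₂ }
  have interchange {A B : C} := add_add_add_comm hc δ hδnat (A := A) (B := B)
  exact ⟨{
    add := add hc δ
    zero := zero hO ε
    add_assoc := (EckmannHilton.mul_assoc unital unital interchange).assoc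
    add_comm := (EckmannHilton.mul_comm unital unital interchange).comm
    zero_add := zero_add hO ε hc δ hcounit₁
    comp_add := comp_add hc δ hδnat
    add_comp := add_comp hc δ
    comp_zero := comp_zero hO ε hεnat
    zero_comp := zero_comp hO ε }⟩
end

section
/- Let C = (C, ⊗, I) be a monoidal category admitting an initial object 0 and a coproduct I + I of the unit object with itself, and suppose both of these colimits are preserved by each functor A ⊗ (−). If C is semi-additive, then the object 0 has a right dual (indeed 0 is right dual to itself) and the object I + I has a right dual (indeed I + I is right dual to itself). -/
open CategoryTheory CategoryTheory.Limits CategoryTheory.MonoidalCategory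

universe v u

/-- `Y` is a right dual of `X`, witnessed by `η : 𝟙_ C ⟶ Y ⊗ X`, when every morphism
`f : A ⟶ B ⊗ X` factors as `(g ▷ X) ∘ (A ◁ η)` (modulo unitor and associator) for a
unique `g : A ⊗ Y ⟶ B`. -/
def IsRightDual {C : Type u} [Category.{v} C] [MonoidalCategory C]
    (X Y : C) (η : 𝟙_ C ⟶ Y ⊗ X) : Prop :=
  ∀ (A B : C) (f : A ⟶ B ⊗ X), ∃! g : A ⊗ Y ⟶ B,
    f = (ρ_ A).inv ≫ (A ◁ η) ≫ (α_ A Y X).inv ≫ (g ▷ X)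

/-- `Y` is a left dual of `X`, witnessed by `η : 𝟙_ C ⟶ X ⊗ Y`, when every morphism
`f : A ⟶ X ⊗ B` factors as `(X ◁ g) ∘ (η ▷ A)` (modulo unitor and associator) for a
unique `g : Y ⊗ A ⟶ B`. -/
def IsLeftDual {C : Type u} [Category.{v} C] [MonoidalCategory C]
    (X Y : C) (η : 𝟙_ C ⟶ X ⊗ Y) : Prop :=
  ∀ (A B : C) (f : A ⟶ X ⊗ B), ∃! g : Y ⊗ A ⟶ B,
    f = (λ_ A).inv ≫ (η ▷ A) ≫ (α_ X Y A).hom ≫ (X ◁ g)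

/-! In a semi-additive category an initial object is a zero object and a binary coproduct is a
biproduct; since `A ⊗ −` preserves both, so are `A ⊗ O` and `A ⊗ J`. For `O`, the factor
`g : A ⊗ O ⟶ B` is unique because `A ⊗ O` is initial, and it exists because `B ⊗ O` is also
terminal. For `J = 𝟙 ⊕ 𝟙` take `η = Σₖ jₖ ⊗ jₖ`: composing the transpose of `g : A ⊗ J ⟶ B`
with the projections `B ◁ pₖ` recovers `A ◁ jₖ ≫ g` up to unitors, and a map out of `A ⊗ J` is
freely determined by these two components. -/

namespace SemiAdditive

variable {C : Type u} [Category.{v} C] (S : SemiAdditive C)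

theorem add_zero {A B : C} (f : A ⟶ B) : S.add f S.zero = f := by
  rw [S.add_comm, S.zero_add]

theorem eq_zero_of_isInitial {T : C} (hT : IsInitial T) {A : C} (u : A ⟶ T) : u = S.zero :=
  calc u = u ≫ 𝟙 T := (Category.comp_id u).symm
    _ = u ≫ S.zero := by rw [hT.hom_ext (𝟙 T) S.zero]
    _ = S.zero := S.comp_zero u

structure IsBiprojection {X₁ X₂ Y : C} (i₁ : X₁ ⟶ Y) (i₂ : X₂ ⟶ Y) (q₁ : Y ⟶ X₁)
    (q₂ : Y ⟶ X₂) : Prop where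
  inl_fst : i₁ ≫ q₁ = 𝟙 X₁
  inl_snd : i₁ ≫ q₂ = S.zero
  inr_fst : i₂ ≫ q₁ = S.zero
  inr_snd : i₂ ≫ q₂ = 𝟙 X₂

variable {S}

theorem exists_isBiprojection {X₁ X₂ Y : C} {i₁ : X₁ ⟶ Y} {i₂ : X₂ ⟶ Y}
    (h : IsColimit (BinaryCofan.mk i₁ i₂)) : ∃ q₁ q₂, S.IsBiprojection i₁ i₂ q₁ q₂ :=
  ⟨BinaryCofan.IsColimit.desc h (𝟙 X₁) S.zero, BinaryCofan.IsColimit.desc h S.zero (𝟙 X₂),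
    BinaryCofan.IsColimit.inl_desc h _ _, BinaryCofan.IsColimit.inl_desc h _ _,
    BinaryCofan.IsColimit.inr_desc h _ _, BinaryCofan.IsColimit.inr_desc h _ _⟩

theorem IsBiprojection.add_eq_id {X₁ X₂ Y : C} {i₁ : X₁ ⟶ Y} {i₂ : X₂ ⟶ Y} {q₁ : Y ⟶ X₁}
    {q₂ : Y ⟶ X₂} (hq : S.IsBiprojection i₁ i₂ q₁ q₂) (h : IsColimit (BinaryCofan.mk i₁ i₂)) :
    S.add (q₁ ≫ i₁) (q₂ ≫ i₂) = 𝟙 Y := by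
  refine BinaryCofan.IsColimit.hom_ext h ?_ ?_
  · change i₁ ≫ _ = i₁ ≫ _
    rw [S.comp_add, reassoc_of% hq.inl_fst, reassoc_of% hq.inl_snd, S.zero_comp, S.add_zero,
      Category.comp_id]
  · change i₂ ≫ _ = i₂ ≫ _
    rw [S.comp_add, reassoc_of% hq.inr_fst, reassoc_of% hq.inr_snd, S.zero_comp, S.zero_add,
      Category.comp_id]

theorem IsBiprojection.hom_ext {X₁ X₂ Y : C} {i₁ : X₁ ⟶ Y} {i₂ : X₂ ⟶ Y} {q₁ : Y ⟶ X₁}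
    {q₂ : Y ⟶ X₂} (hq : S.IsBiprojection i₁ i₂ q₁ q₂) (h : IsColimit (BinaryCofan.mk i₁ i₂))
    {A : C} {u v : A ⟶ Y} (h₁ : u ≫ q₁ = v ≫ q₁) (h₂ : u ≫ q₂ = v ≫ q₂) : u = v :=
  calc u = u ≫ S.add (q₁ ≫ i₁) (q₂ ≫ i₂) := by rw [hq.add_eq_id h, Category.comp_id]
    _ = v ≫ S.add (q₁ ≫ i₁) (q₂ ≫ i₂) := by
      simp only [S.comp_add, reassoc_of% h₁, reassoc_of% h₂]
    _ = v := by rw [hq.add_eq_id h, Category.comp_id]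

end SemiAdditive

theorem BinaryCofan.IsColimit.existsUnique_desc {C : Type u} [Category.{v} C] {W X Y : C}
    {s : BinaryCofan X Y} (h : IsColimit s) (f : X ⟶ W) (g : Y ⟶ W) :
    ∃! l : s.pt ⟶ W, s.inl ≫ l = f ∧ s.inr ≫ l = g :=
  ⟨BinaryCofan.IsColimit.desc h f g,
    ⟨BinaryCofan.IsColimit.inl_desc h f g, BinaryCofan.IsColimit.inr_desc h f g⟩,
    fun _ ⟨hl₁, hl₂⟩ => BinaryCofan.IsColimit.hom_ext h
      (hl₁.trans (BinaryCofan.IsColimit.inl_desc h f g).symm)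
      (hl₂.trans (BinaryCofan.IsColimit.inr_desc h f g).symm)⟩

section Monoidal

variable {C : Type u} [Category.{v} C] [MonoidalCategory C]

def rightDualFactor {X Y : C} (η : 𝟙_ C ⟶ Y ⊗ X) {A B : C} (g : A ⊗ Y ⟶ B) : A ⟶ B ⊗ X :=
  (ρ_ A).inv ≫ (A ◁ η) ≫ (α_ A Y X).inv ≫ (g ▷ X)

theorem rightDualFactor_comp_whiskerLeft {X Y : C} {η : 𝟙_ C ⟶ Y ⊗ X} {j : 𝟙_ C ⟶ Y}
    {p : X ⟶ 𝟙_ C} (hη : η ≫ Y ◁ p = j ≫ (ρ_ Y).inv) {A B : C} (g : A ⊗ Y ⟶ B) :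
    (ρ_ A).hom ≫ rightDualFactor η g ≫ B ◁ p ≫ (ρ_ B).hom = A ◁ j ≫ g := by
  simp only [rightDualFactor, Category.assoc, Iso.hom_inv_id_assoc, ← whisker_exchange_assoc,
    rightUnitor_naturality]
  rw [← associator_inv_naturality_right_assoc, ← MonoidalCategory.whiskerLeft_comp_assoc, hη]
  simp

theorem isRightDual_of_isInitial (S : SemiAdditive C) {X Y : C}
    (hX : ∀ A : C, IsInitial (A ⊗ X)) (hY : ∀ A : C, IsInitial (A ⊗ Y)) (η : 𝟙_ C ⟶ Y ⊗ X) :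
    IsRightDual X Y η := fun A B _ =>
  ⟨(hY A).to B, (S.eq_zero_of_isInitial (hX B) _).trans (S.eq_zero_of_isInitial (hX B) _).symm,
    fun g _ => (hY A).hom_ext g _⟩

namespace SemiAdditive

/-- `Σₖ jₖ ⊗ jₖ`: each summand `jₖ ≫ (ρ_ J).inv ≫ J ◁ jₖ` equals `(λ_ (𝟙_ C)).inv ≫ (jₖ ⊗ₘ jₖ)`. -/
def diagUnit (S : SemiAdditive C) {J : C} (j₁ j₂ : 𝟙_ C ⟶ J) : 𝟙_ C ⟶ J ⊗ J :=
  S.add (j₁ ≫ (ρ_ J).inv ≫ J ◁ j₁) (j₂ ≫ (ρ_ J).inv ≫ J ◁ j₂)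

theorem whiskerLeft_zero (S : SemiAdditive C) {O : C} (hO : IsInitial O)
    (hpO : ∀ A : C, IsInitial (A ⊗ O)) (B X Y : C) : B ◁ (S.zero : X ⟶ Y) = S.zero :=
  calc B ◁ (S.zero : X ⟶ Y) = B ◁ (S.zero : X ⟶ O) ≫ B ◁ hO.to Y := by
        rw [← MonoidalCategory.whiskerLeft_comp, S.zero_comp]
    _ = S.zero := by rw [S.eq_zero_of_isInitial (hpO B) (B ◁ S.zero), S.zero_comp]

variable {S : SemiAdditive C}

theorem IsBiprojection.whiskerLeft
    (hz : ∀ B X Y : C, B ◁ (S.zero : X ⟶ Y) = S.zero) {X₁ X₂ Y : C} {i₁ : X₁ ⟶ Y}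
    {i₂ : X₂ ⟶ Y} {q₁ : Y ⟶ X₁} {q₂ : Y ⟶ X₂} (hq : S.IsBiprojection i₁ i₂ q₁ q₂) (B : C) :
    S.IsBiprojection (B ◁ i₁) (B ◁ i₂) (B ◁ q₁) (B ◁ q₂) where
  inl_fst := by rw [← MonoidalCategory.whiskerLeft_comp, hq.inl_fst, whiskerLeft_id]
  inl_snd := by rw [← MonoidalCategory.whiskerLeft_comp, hq.inl_snd, hz]
  inr_fst := by rw [← MonoidalCategory.whiskerLeft_comp, hq.inr_fst, hz]
  inr_snd := by rw [← MonoidalCategory.whiskerLeft_comp, hq.inr_snd, whiskerLeft_id]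

variable {J : C} {j₁ j₂ : 𝟙_ C ⟶ J} {p₁ p₂ : J ⟶ 𝟙_ C}

theorem diagUnit_comp_whiskerLeft_fst (hz : ∀ B X Y : C, B ◁ (S.zero : X ⟶ Y) = S.zero)
    (hq : S.IsBiprojection j₁ j₂ p₁ p₂) :
    S.diagUnit j₁ j₂ ≫ J ◁ p₁ = j₁ ≫ (ρ_ J).inv := by
  simp only [diagUnit, S.add_comp, Category.assoc, ← MonoidalCategory.whiskerLeft_comp,
    hq.inl_fst, hq.inr_fst, whiskerLeft_id, hz, S.comp_zero, Category.comp_id, S.add_zero]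

theorem diagUnit_comp_whiskerLeft_snd (hz : ∀ B X Y : C, B ◁ (S.zero : X ⟶ Y) = S.zero)
    (hq : S.IsBiprojection j₁ j₂ p₁ p₂) :
    S.diagUnit j₁ j₂ ≫ J ◁ p₂ = j₂ ≫ (ρ_ J).inv := by
  simp only [diagUnit, S.add_comp, Category.assoc, ← MonoidalCategory.whiskerLeft_comp,
    hq.inl_snd, hq.inr_snd, whiskerLeft_id, hz, S.comp_zero, Category.comp_id, S.zero_add]

theorem isRightDual_diagUnit (hz : ∀ B X Y : C, B ◁ (S.zero : X ⟶ Y) = S.zero)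
    (hq : S.IsBiprojection j₁ j₂ p₁ p₂)
    (hpJ : ∀ A : C, IsColimit (BinaryCofan.mk (A ◁ j₁) (A ◁ j₂))) :
    IsRightDual J J (S.diagUnit j₁ j₂) := by
  intro A B f
  have hfactor : ∀ g : A ⊗ J ⟶ B, f = rightDualFactor (S.diagUnit j₁ j₂) g ↔
      A ◁ j₁ ≫ g = (ρ_ A).hom ≫ f ≫ B ◁ p₁ ≫ (ρ_ B).hom ∧
      A ◁ j₂ ≫ g = (ρ_ A).hom ≫ f ≫ B ◁ p₂ ≫ (ρ_ B).hom := by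
    intro g
    rw [← rightDualFactor_comp_whiskerLeft (diagUnit_comp_whiskerLeft_fst hz hq),
      ← rightDualFactor_comp_whiskerLeft (diagUnit_comp_whiskerLeft_snd hz hq),
      Iso.cancel_iso_hom_left, Iso.cancel_iso_hom_left, Iso.cancel_iso_hom_right_assoc,
      Iso.cancel_iso_hom_right_assoc]
    refine ⟨fun h => h ▸ ⟨rfl, rfl⟩, fun ⟨h₁, h₂⟩ => ?_⟩
    exact (hq.whiskerLeft hz B).hom_ext (hpJ B) h₁.symm h₂.symm
  exact (existsUnique_congr hfactor).mpr (BinaryCofan.IsColimit.existsUnique_desc (hpJ A) _ _)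

end SemiAdditive

end Monoidal

/-- Let `C` be a monoidal category with an initial object `O` and a coproduct
`J = 𝟙_C + 𝟙_C` of the unit with itself, both preserved by each functor `A ⊗ (−)`.
If `C` is semi-additive, then `O` is right dual to itself and `J` is right dual to
itself. -/
theorem selfDual_of_semiAdditive {C : Type u} [Category.{v} C] [MonoidalCategory C]
    (S : SemiAdditive C)
    (O : C) (hO : IsInitial O)
    (J : C) (j₁ j₂ : 𝟙_ C ⟶ J) (hJ : IsColimit (BinaryCofan.mk j₁ j₂))
    (hpO : ∀ A : C, IsInitial (A ⊗ O))
    (hpJ : ∀ A : C, IsColimit (BinaryCofan.mk (A ◁ j₁) (A ◁ j₂))) :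
    (∃ η : 𝟙_ C ⟶ O ⊗ O, IsRightDual O O η) ∧
    (∃ η : 𝟙_ C ⟶ J ⊗ J, IsRightDual J J η) := by
  obtain ⟨p₁, p₂, hp⟩ := SemiAdditive.exists_isBiprojection (S := S) hJ
  have hz := S.whiskerLeft_zero hO hpO
  exact ⟨⟨S.zero, isRightDual_of_isInitial S hpO hpO S.zero⟩,
    ⟨S.diagUnit j₁ j₂, SemiAdditive.isRightDual_diagUnit hz hp hpJ⟩⟩
end

section
/- Let C = (C, ⊗, I) be a monoidal category admitting an initial object 0 and a coproduct I + I of the unit object with itself, and suppose both of these colimits are preserved by each functor A ⊗ (−). If the objects 0 and I + I admit right duals, then C is semi-additive. -/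
open CategoryTheory CategoryTheory.Limits CategoryTheory.MonoidalCategory

universe v u

/-!
A right dual `Y` of `O` makes every morphism into `B ⊗ O` factor through the initial object
`(B ⊗ Y) ⊗ O`, so every `B ⊗ O` is a zero object; hence `C` has zero morphisms and each `A ◁ -`
preserves them. Factoring the coprojections through the right dual `η : 𝟙 ⟶ D ⊗ J` of `J` as
`jᵢ = η ≫ (eᵢ ▷ J) ≫ λ` and copairing the `eᵢ ≫ jᵢ` gives `δ : 𝟙 ⟶ J` whose composites with both
projections `J ⟶ 𝟙` are identities. As `A ⊗ J` is a coproduct `A + A`, the biproduct formula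
`f + g := (ρ⁻¹ ≫ A ◁ δ) ≫ [f, g]` defines an addition with unit `0`, natural on both sides and
satisfying the interchange law with copairing; the Eckmann–Hilton argument then makes it
commutative and associative.
-/

namespace IsRightDual

variable {C : Type u} [Category.{v} C] [MonoidalCategory C] {X Y : C} {η : 𝟙_ C ⟶ Y ⊗ X}

theorem hom_ext_of_isInitial (h : IsRightDual X Y η) (hX : ∀ A : C, IsInitial (A ⊗ X))
    {A B : C} (f f' : A ⟶ B ⊗ X) : f = f' := by
  obtain ⟨g, rfl, -⟩ := h A B f
  obtain ⟨g', rfl, -⟩ := h A B f'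
  rw [(hX (A ⊗ Y)).hom_ext (g ▷ X) (g' ▷ X)]

theorem isZero_tensor_of_isInitial (h : IsRightDual X Y η) (hX : ∀ A : C, IsInitial (A ⊗ X))
    (B : C) : IsZero (B ⊗ X) where
  unique_to Z := ⟨⟨⟨(hX B).to Z⟩, fun _ => (hX B).hom_ext _ _⟩⟩
  unique_from W := ⟨⟨⟨(ρ_ W).inv ≫ (W ◁ η) ≫ (α_ W Y X).inv ≫ (hX (W ⊗ Y)).to (B ⊗ X)⟩,
    fun _ => h.hom_ext_of_isInitial hX _ _⟩⟩

theorem exists_eq_comp_whiskerRight (h : IsRightDual X Y η) (f : 𝟙_ C ⟶ X) :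
    ∃ e : Y ⟶ 𝟙_ C, f = η ≫ (e ▷ X) ≫ (λ_ X).hom := by
  obtain ⟨g, hg, -⟩ := h (𝟙_ C) (𝟙_ C) (f ≫ (λ_ X).inv)
  refine ⟨(λ_ Y).inv ≫ g, ?_⟩
  rw [← cancel_mono (λ_ X).inv, hg]
  monoidal

end IsRightDual

theorem whiskerLeft_zero_of_isZero_tensor {C : Type u} [Category.{v} C] [MonoidalCategory C]
    [HasZeroMorphisms C] {O : C} (hO : ∀ A : C, IsZero (A ⊗ O)) (A : C) {X X' : C} :
    A ◁ (0 : X ⟶ X') = 0 := by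
  rw [← zero_comp (X := X) (f := (0 : O ⟶ X')), MonoidalCategory.whiskerLeft_comp,
    (hO A).eq_of_src (A ◁ 0) 0, comp_zero]

namespace UnitCoproduct

variable {C : Type u} [Category.{v} C] [MonoidalCategory C] {J : C} {j₁ j₂ : 𝟙_ C ⟶ J}
  (hJ : ∀ A : C, IsColimit (BinaryCofan.mk (A ◁ j₁) (A ◁ j₂)))

def desc {A B : C} (f g : A ⟶ B) : A ⊗ J ⟶ B :=
  BinaryCofan.IsColimit.desc (hJ A) ((ρ_ A).hom ≫ f) ((ρ_ A).hom ≫ g)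

theorem whiskerLeft_inl_desc {A B : C} (f g : A ⟶ B) :
    (A ◁ j₁) ≫ desc hJ f g = (ρ_ A).hom ≫ f :=
  BinaryCofan.IsColimit.inl_desc (hJ A) _ _

theorem whiskerLeft_inr_desc {A B : C} (f g : A ⟶ B) :
    (A ◁ j₂) ≫ desc hJ f g = (ρ_ A).hom ≫ g :=
  BinaryCofan.IsColimit.inr_desc (hJ A) _ _

theorem hom_ext {A B : C} (hA : IsColimit (BinaryCofan.mk (A ◁ j₁) (A ◁ j₂)))
    {F G : A ⊗ J ⟶ B} (h₁ : (A ◁ j₁) ≫ F = (A ◁ j₁) ≫ G) (h₂ : (A ◁ j₂) ≫ F = (A ◁ j₂) ≫ G) :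
    F = G :=
  BinaryCofan.IsColimit.hom_ext hA h₁ h₂

theorem desc_comp {A B B' : C} (f g : A ⟶ B) (h : B ⟶ B') :
    desc hJ f g ≫ h = desc hJ (f ≫ h) (g ≫ h) := by
  apply hom_ext (hJ A)
  · rw [← Category.assoc, whiskerLeft_inl_desc, whiskerLeft_inl_desc, Category.assoc]
  · rw [← Category.assoc, whiskerLeft_inr_desc, whiskerLeft_inr_desc, Category.assoc]

theorem whiskerRight_desc {W A B : C} (h : W ⟶ A) (f g : A ⟶ B) :
    (h ▷ J) ≫ desc hJ f g = desc hJ (h ≫ f) (h ≫ g) := by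
  apply hom_ext (hJ W)
  · rw [whisker_exchange_assoc, whiskerLeft_inl_desc, whiskerLeft_inl_desc,
      rightUnitor_naturality_assoc]
  · rw [whisker_exchange_assoc, whiskerLeft_inr_desc, whiskerLeft_inr_desc,
      rightUnitor_naturality_assoc]

def diag (δ : 𝟙_ C ⟶ J) (A : C) : A ⟶ A ⊗ J := (ρ_ A).inv ≫ (A ◁ δ)

def add (δ : 𝟙_ C ⟶ J) {A B : C} (f g : A ⟶ B) : A ⟶ B := diag δ A ≫ desc hJ f g

protected theorem comp_add (δ : 𝟙_ C ⟶ J) {W A B : C} (h : W ⟶ A) (f g : A ⟶ B) :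
    h ≫ add hJ δ f g = add hJ δ (h ≫ f) (h ≫ g) := by
  simp only [add, diag, Category.assoc]
  rw [rightUnitor_inv_naturality_assoc, ← whisker_exchange_assoc, whiskerRight_desc]

protected theorem add_comp (δ : 𝟙_ C ⟶ J) {A B B' : C} (f g : A ⟶ B) (h : B ⟶ B') :
    add hJ δ f g ≫ h = add hJ δ (f ≫ h) (g ≫ h) := by
  rw [add, add, Category.assoc, desc_comp]

theorem add_desc (δ : 𝟙_ C ⟶ J) {A B : C} (f₁ f₂ g₁ g₂ : A ⟶ B) :
    add hJ δ (desc hJ f₁ f₂) (desc hJ g₁ g₂) = desc hJ (add hJ δ f₁ g₁) (add hJ δ f₂ g₂) := by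
  apply hom_ext (hJ A)
  · rw [UnitCoproduct.comp_add, whiskerLeft_inl_desc, whiskerLeft_inl_desc,
      whiskerLeft_inl_desc, UnitCoproduct.comp_add]
  · rw [UnitCoproduct.comp_add, whiskerLeft_inr_desc, whiskerLeft_inr_desc,
      whiskerLeft_inr_desc, UnitCoproduct.comp_add]

variable [HasZeroMorphisms C]

def fst : J ⟶ 𝟙_ C := (λ_ J).inv ≫ desc hJ (𝟙 _) 0

def snd : J ⟶ 𝟙_ C := (λ_ J).inv ≫ desc hJ 0 (𝟙 _)

theorem inl_fst : j₁ ≫ fst hJ = 𝟙 _ := by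
  rw [fst, leftUnitor_inv_naturality_assoc, whiskerLeft_inl_desc, Category.comp_id,
    unitors_inv_equal, Iso.inv_hom_id]

theorem inr_fst : j₂ ≫ fst hJ = 0 := by
  rw [fst, leftUnitor_inv_naturality_assoc, whiskerLeft_inr_desc, comp_zero, comp_zero]

theorem inl_snd : j₁ ≫ snd hJ = 0 := by
  rw [snd, leftUnitor_inv_naturality_assoc, whiskerLeft_inl_desc, comp_zero, comp_zero]

theorem inr_snd : j₂ ≫ snd hJ = 𝟙 _ := by
  rw [snd, leftUnitor_inv_naturality_assoc, whiskerLeft_inr_desc, Category.comp_id,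
    unitors_inv_equal, Iso.inv_hom_id]

theorem desc_id_zero (hw : ∀ (A : C) {X X' : C}, A ◁ (0 : X ⟶ X') = 0) (A : C) :
    desc hJ (𝟙 A) 0 = (A ◁ fst hJ) ≫ (ρ_ A).hom := by
  apply hom_ext (hJ A)
  · rw [whiskerLeft_inl_desc, ← whiskerLeft_comp_assoc, inl_fst, MonoidalCategory.whiskerLeft_id,
      Category.id_comp, Category.comp_id]
  · rw [whiskerLeft_inr_desc, ← whiskerLeft_comp_assoc, inr_fst, hw, comp_zero, zero_comp]

theorem desc_zero_id (hw : ∀ (A : C) {X X' : C}, A ◁ (0 : X ⟶ X') = 0) (A : C) :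
    desc hJ 0 (𝟙 A) = (A ◁ snd hJ) ≫ (ρ_ A).hom := by
  apply hom_ext (hJ A)
  · rw [whiskerLeft_inl_desc, ← whiskerLeft_comp_assoc, inl_snd, hw, comp_zero, zero_comp]
  · rw [whiskerLeft_inr_desc, ← whiskerLeft_comp_assoc, inr_snd, MonoidalCategory.whiskerLeft_id,
      Category.id_comp, Category.comp_id]

protected theorem add_zero (hw : ∀ (A : C) {X X' : C}, A ◁ (0 : X ⟶ X') = 0)
    {δ : 𝟙_ C ⟶ J} (hδ : δ ≫ fst hJ = 𝟙 _) {A B : C} (f : A ⟶ B) : add hJ δ f 0 = f := by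
  have hf : desc hJ f 0 = desc hJ (𝟙 A) 0 ≫ f := by
    rw [desc_comp, Category.id_comp, zero_comp]
  rw [add, hf, desc_id_zero hJ hw, diag]
  simp only [Category.assoc]
  rw [← whiskerLeft_comp_assoc, hδ, MonoidalCategory.whiskerLeft_id, Category.id_comp,
    Iso.inv_hom_id_assoc]

protected theorem zero_add (hw : ∀ (A : C) {X X' : C}, A ◁ (0 : X ⟶ X') = 0)
    {δ : 𝟙_ C ⟶ J} (hδ : δ ≫ snd hJ = 𝟙 _) {A B : C} (f : A ⟶ B) : add hJ δ 0 f = f := by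
  have hf : desc hJ 0 f = desc hJ 0 (𝟙 A) ≫ f := by
    rw [desc_comp, Category.id_comp, zero_comp]
  rw [add, hf, desc_zero_id hJ hw, diag]
  simp only [Category.assoc]
  rw [← whiskerLeft_comp_assoc, hδ, MonoidalCategory.whiskerLeft_id, Category.id_comp,
    Iso.inv_hom_id_assoc]

theorem add_comm_of_unital {δ : 𝟙_ C ⟶ J} (hzero_add : ∀ {A B : C} (f : A ⟶ B), add hJ δ 0 f = f)
    (hadd_zero : ∀ {A B : C} (f : A ⟶ B), add hJ δ f 0 = f) {A B : C} (f g : A ⟶ B) :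
    add hJ δ f g = add hJ δ g f := by
  have h : desc hJ f g = add hJ δ (desc hJ 0 g) (desc hJ f 0) := by
    rw [add_desc, hzero_add, hadd_zero]
  rw [add, h, UnitCoproduct.comp_add, ← add, ← add, hzero_add, hadd_zero]

theorem add_assoc_of_unital {δ : 𝟙_ C ⟶ J} (hzero_add : ∀ {A B : C} (f : A ⟶ B), add hJ δ 0 f = f)
    (hadd_zero : ∀ {A B : C} (f : A ⟶ B), add hJ δ f 0 = f) {A B : C} (f g k : A ⟶ B) :
    add hJ δ (add hJ δ f g) k = add hJ δ f (add hJ δ g k) := by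
  have h : desc hJ (add hJ δ f g) k = add hJ δ (desc hJ f 0) (desc hJ g k) := by
    rw [add_desc, hzero_add]
  rw [add, h, UnitCoproduct.comp_add, ← add, ← add, hadd_zero]

theorem exists_comp_fst_eq_id_and_comp_snd_eq_id {D : C} {η : 𝟙_ C ⟶ D ⊗ J}
    (hD : IsRightDual J D η) : ∃ δ : 𝟙_ C ⟶ J, δ ≫ fst hJ = 𝟙 _ ∧ δ ≫ snd hJ = 𝟙 _ := by
  obtain ⟨e₁, he₁⟩ := hD.exists_eq_comp_whiskerRight j₁
  obtain ⟨e₂, he₂⟩ := hD.exists_eq_comp_whiskerRight j₂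
  refine ⟨η ≫ desc hJ (e₁ ≫ j₁) (e₂ ≫ j₂), ?_, ?_⟩
  · calc (η ≫ desc hJ (e₁ ≫ j₁) (e₂ ≫ j₂)) ≫ fst hJ = η ≫ (e₁ ▷ J) ≫ desc hJ (𝟙 _) 0 := by
          rw [Category.assoc, desc_comp, Category.assoc, Category.assoc, inl_fst, inr_fst,
            Category.comp_id, comp_zero, whiskerRight_desc, Category.comp_id, comp_zero]
      _ = (η ≫ (e₁ ▷ J) ≫ (λ_ J).hom) ≫ fst hJ := by
          simp only [fst, Category.assoc, Iso.hom_inv_id_assoc]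
      _ = j₁ ≫ fst hJ := by rw [← he₁]
      _ = 𝟙 _ := inl_fst hJ
  · calc (η ≫ desc hJ (e₁ ≫ j₁) (e₂ ≫ j₂)) ≫ snd hJ = η ≫ (e₂ ▷ J) ≫ desc hJ 0 (𝟙 _) := by
          rw [Category.assoc, desc_comp, Category.assoc, Category.assoc, inl_snd, inr_snd,
            Category.comp_id, comp_zero, whiskerRight_desc, Category.comp_id, comp_zero]
      _ = (η ≫ (e₂ ▷ J) ≫ (λ_ J).hom) ≫ snd hJ := by
          simp only [snd, Category.assoc, Iso.hom_inv_id_assoc]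
      _ = j₂ ≫ snd hJ := by rw [← he₂]
      _ = 𝟙 _ := inr_snd hJ

end UnitCoproduct

def SemiAdditive.ofUnitCoproduct {C : Type u} [Category.{v} C] [MonoidalCategory C]
    [HasZeroMorphisms C] {J : C} {j₁ j₂ : 𝟙_ C ⟶ J}
    (hJ : ∀ A : C, IsColimit (BinaryCofan.mk (A ◁ j₁) (A ◁ j₂)))
    (hw : ∀ (A : C) {X X' : C}, A ◁ (0 : X ⟶ X') = 0) (δ : 𝟙_ C ⟶ J)
    (hδ₁ : δ ≫ UnitCoproduct.fst hJ = 𝟙 _) (hδ₂ : δ ≫ UnitCoproduct.snd hJ = 𝟙 _) :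
    SemiAdditive C where
  add := UnitCoproduct.add hJ δ
  zero := 0
  add_assoc := UnitCoproduct.add_assoc_of_unital hJ (UnitCoproduct.zero_add hJ hw hδ₂)
    (UnitCoproduct.add_zero hJ hw hδ₁)
  add_comm := UnitCoproduct.add_comm_of_unital hJ (UnitCoproduct.zero_add hJ hw hδ₂)
    (UnitCoproduct.add_zero hJ hw hδ₁)
  zero_add := UnitCoproduct.zero_add hJ hw hδ₂
  comp_add := UnitCoproduct.comp_add hJ δ
  add_comp := UnitCoproduct.add_comp hJ δ
  comp_zero _ := Limits.comp_zero
  zero_comp _ := Limits.zero_comp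

theorem semiAdditive_of_rightDuals_general {C : Type u} [Category.{v} C] [MonoidalCategory C]
    (O : C)
    (J : C) (j₁ j₂ : 𝟙_ C ⟶ J)
    (hpO : ∀ A : C, IsInitial (A ⊗ O))
    (hpJ : ∀ A : C, IsColimit (BinaryCofan.mk (A ◁ j₁) (A ◁ j₂)))
    (hdO : ∃ (Y : C) (η : 𝟙_ C ⟶ Y ⊗ O), IsRightDual O Y η)
    (hdJ : ∃ (D : C) (η : 𝟙_ C ⟶ D ⊗ J), IsRightDual J D η) :
    Nonempty (SemiAdditive C) := by
  obtain ⟨Y, η₀, hY⟩ := hdO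
  obtain ⟨D, η, hD⟩ := hdJ
  have hZ : ∀ A : C, IsZero (A ⊗ O) := hY.isZero_tensor_of_isInitial hpO
  have : HasZeroObject C := (hZ (𝟙_ C)).hasZeroObject
  let : HasZeroMorphisms C := HasZeroObject.zeroMorphismsOfZeroObject
  obtain ⟨δ, hδ₁, hδ₂⟩ := UnitCoproduct.exists_comp_fst_eq_id_and_comp_snd_eq_id hpJ hD
  exact ⟨.ofUnitCoproduct hpJ (whiskerLeft_zero_of_isZero_tensor hZ) δ hδ₁ hδ₂⟩

/-- **Theorem 3 ("if" direction).** Let `C` be a monoidal category with an initial object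
`O` and a coproduct `J = 𝟙_C + 𝟙_C` of the unit with itself, both preserved by each
functor `A ⊗ (−)`.  If `O` and `J` admit right duals, then `C` is semi-additive. -/
theorem semiAdditive_of_rightDuals {C : Type u} [Category.{v} C] [MonoidalCategory C]
    (O : C) (hO : IsInitial O)
    (J : C) (j₁ j₂ : 𝟙_ C ⟶ J) (hJ : IsColimit (BinaryCofan.mk j₁ j₂))
    (hpO : ∀ A : C, IsInitial (A ⊗ O))
    (hpJ : ∀ A : C, IsColimit (BinaryCofan.mk (A ◁ j₁) (A ◁ j₂)))
    (hdO : ∃ (Y : C) (η : 𝟙_ C ⟶ Y ⊗ O), IsRightDual O Y η)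
    (hdJ : ∃ (D : C) (η : 𝟙_ C ⟶ D ⊗ J), IsRightDual J D η) :
    Nonempty (SemiAdditive C) :=
  semiAdditive_of_rightDuals_general O J j₁ j₂ hpO hpJ hdO hdJ
end

section
/- Every compact closed (rigid) monoidal category possessing finite coproducts has a zero object and finite biproducts. -/
open CategoryTheory CategoryTheory.Limits CategoryTheory.MonoidalCategory

universe v u

/-!
Duals make `X ⊗ -` and `- ⊗ X` left adjoints, so tensoring preserves coproducts and the initial
object `0`. A point `𝟙_ C ⟶ R ⊗ 0 ≅ 0`, for a dual `R` of `0`, makes `0` terminal as well: every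
`A ⟶ 0` then factors through the initial object `A ⊗ 0`.

For `V = ∐ᵢ 𝟙_ C` with dual `W`, the decomposition `W ⊗ V ≅ ∐ᵢ W` lets the `i`-th summand be
paired with the copoint of `W` dual to the `i`-th coprojection of `V`; after the coevaluation this
gives a "diagonal" `𝟙_ C ⟶ V` all of whose components are `𝟙`. Copying along it,
`X ≅ 𝟙_ C ⊗ X ⟶ V ⊗ X ≅ ∐ᵢ X`, sums finite families of morphisms, and a coproduct whose
projections `πᵢ` satisfy `∑ᵢ πᵢ ≫ ιᵢ = 𝟙` is also a product.
-/

noncomputable section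

namespace IsRightDual

variable {C : Type u} [Category.{v} C] [MonoidalCategory C]

@[reducible]
def exactPairing {X Y : C} {η : 𝟙_ C ⟶ Y ⊗ X} (h : IsRightDual X Y η) :
    ExactPairing Y X where
  coevaluation' := η
  evaluation' := (h X (𝟙_ C) (λ_ X).inv).choose
  coevaluation_evaluation' := by
    rw [← cancel_epi (ρ_ X).inv]
    simpa using (h X (𝟙_ C) (λ_ X).inv).choose_spec.1.symm
  evaluation_coevaluation' := by
    set ε := (h X (𝟙_ C) (λ_ X).inv).choose
    have snake : X ◁ η ≫ (α_ X Y X).inv ≫ ε ▷ X = (ρ_ X).hom ≫ (λ_ X).inv := by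
      rw [← cancel_epi (ρ_ X).inv]
      simpa using (h X (𝟙_ C) (λ_ X).inv).choose_spec.1.symm
    -- `η` factors both through `λ_ Y` and through the other zigzag; uniqueness identifies them.
    have hunit : η = (ρ_ (𝟙_ C)).inv ≫ 𝟙_ C ◁ η ≫ (α_ (𝟙_ C) Y X).inv ≫ (λ_ Y).hom ▷ X := by
      monoidal
    have hzigzag : η = (ρ_ (𝟙_ C)).inv ≫ 𝟙_ C ◁ η ≫ (α_ (𝟙_ C) Y X).inv ≫
        (η ▷ Y ≫ (α_ Y X Y).hom ≫ Y ◁ ε ≫ (ρ_ Y).hom) ▷ X :=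
      calc η = 𝟙 _ ⊗≫ η ⊗≫ Y ◁ (X ◁ η ≫ (α_ X Y X).inv ≫ ε ▷ X) ⊗≫ 𝟙 _ := by
            rw [snake]; monoidal
        _ = 𝟙 _ ⊗≫ (η ▷ 𝟙_ C ≫ (Y ⊗ X) ◁ η) ⊗≫ Y ◁ ((α_ X Y X).inv ≫ ε ▷ X) ⊗≫ 𝟙 _ := by
            monoidal
        _ = 𝟙 _ ⊗≫ (𝟙_ C ◁ η ≫ η ▷ (Y ⊗ X)) ⊗≫ Y ◁ ((α_ X Y X).inv ≫ ε ▷ X) ⊗≫ 𝟙 _ := by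
            rw [← whisker_exchange]
        _ = _ := by monoidal
    rw [← cancel_mono (ρ_ Y).hom]
    simpa using (h (𝟙_ C) Y η).unique hzigzag hunit

end IsRightDual

namespace IsLeftDual

variable {C : Type u} [Category.{v} C] [MonoidalCategory C]

@[reducible]
def exactPairing {X Y : C} {η : 𝟙_ C ⟶ X ⊗ Y} (h : IsLeftDual X Y η) :
    ExactPairing X Y where
  coevaluation' := η
  evaluation' := (h X (𝟙_ C) (ρ_ X).inv).choose
  evaluation_coevaluation' := by
    rw [← cancel_epi (λ_ X).inv]
    simpa using (h X (𝟙_ C) (ρ_ X).inv).choose_spec.1.symm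
  coevaluation_evaluation' := by
    set ε := (h X (𝟙_ C) (ρ_ X).inv).choose
    have snake : η ▷ X ≫ (α_ X Y X).hom ≫ X ◁ ε = (λ_ X).hom ≫ (ρ_ X).inv := by
      rw [← cancel_epi (λ_ X).inv]
      simpa using (h X (𝟙_ C) (ρ_ X).inv).choose_spec.1.symm
    have hunit : η = (λ_ (𝟙_ C)).inv ≫ η ▷ 𝟙_ C ≫ (α_ X Y (𝟙_ C)).hom ≫ X ◁ (ρ_ Y).hom := by
      monoidal
    have hzigzag : η = (λ_ (𝟙_ C)).inv ≫ η ▷ 𝟙_ C ≫ (α_ X Y (𝟙_ C)).hom ≫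
        X ◁ (Y ◁ η ≫ (α_ Y X Y).inv ≫ ε ▷ Y ≫ (λ_ Y).hom) :=
      calc η = 𝟙 _ ⊗≫ η ⊗≫ (η ▷ X ≫ (α_ X Y X).hom ≫ X ◁ ε) ▷ Y ⊗≫ 𝟙 _ := by
            rw [snake]; monoidal
        _ = 𝟙 _ ⊗≫ (𝟙_ C ◁ η ≫ η ▷ (X ⊗ Y)) ⊗≫ ((α_ X Y X).hom ≫ X ◁ ε) ▷ Y ⊗≫ 𝟙 _ := by
            monoidal
        _ = 𝟙 _ ⊗≫ (η ▷ 𝟙_ C ≫ (X ⊗ Y) ◁ η) ⊗≫ ((α_ X Y X).hom ≫ X ◁ ε) ▷ Y ⊗≫ 𝟙 _ := by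
            rw [whisker_exchange]
        _ = _ := by monoidal
    rw [← cancel_mono (λ_ Y).hom]
    simpa using (h (𝟙_ C) Y η).unique hzigzag hunit

end IsLeftDual

namespace CategoryTheory.Limits.Cofan.IsColimit

variable {C : Type u} [Category.{v} C] {ι : Type*}

@[simp]
lemma fac_mk {f : ι → C} {P : C} {c : ∀ i, f i ⟶ P}
    (hc : IsColimit (Cofan.mk P c)) {A : C} (g : ∀ i, f i ⟶ A) (i : ι) :
    c i ≫ Cofan.IsColimit.desc hc g = g i :=
  Cofan.IsColimit.fac hc g i

variable [MonoidalCategory C]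

@[simp]
lemma whiskerLeft_desc_assoc {f : ι → C} {P Q : C} {c : ∀ i, f i ⟶ P}
    (hc : IsColimit (Cofan.mk (Q ⊗ P) fun i => Q ◁ c i)) {A B : C} (g : ∀ i, Q ⊗ f i ⟶ A)
    (i : ι) (h : A ⟶ B) : Q ◁ c i ≫ Cofan.IsColimit.desc hc g ≫ h = g i ≫ h :=
  Cofan.IsColimit.fac_assoc hc g i h

@[simp]
lemma whiskerRight_desc {f : ι → C} {P Q : C} {c : ∀ i, f i ⟶ P}
    (hc : IsColimit (Cofan.mk (P ⊗ Q) fun i => c i ▷ Q)) {A : C} (g : ∀ i, f i ⊗ Q ⟶ A)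
    (i : ι) :
    c i ▷ Q ≫ Cofan.IsColimit.desc hc g = g i :=
  Cofan.IsColimit.fac hc g i

@[simp]
lemma whiskerRight_desc_assoc {f : ι → C} {P Q : C} {c : ∀ i, f i ⟶ P}
    (hc : IsColimit (Cofan.mk (P ⊗ Q) fun i => c i ▷ Q)) {A B : C} (g : ∀ i, f i ⊗ Q ⟶ A)
    (i : ι) (h : A ⟶ B) : c i ▷ Q ≫ Cofan.IsColimit.desc hc g ≫ h = g i ≫ h :=
  Cofan.IsColimit.fac_assoc hc g i h

end CategoryTheory.Limits.Cofan.IsColimit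

section Tensor

variable {C : Type u} [Category.{v} C] [MonoidalCategory C] {ι : Type*}

lemma isZero_of_isInitial_of_unit_hom [∀ A : C, (tensorLeft A).IsLeftAdjoint] {O : C}
    (hO : IsInitial O) (t : 𝟙_ C ⟶ O) : IsZero O := by
  have hAO (A : C) : IsInitial (A ⊗ O) := hO.isInitialObj (tensorLeft A)
  have hO1 : IsInitial (O ⊗ 𝟙_ C) := hO.ofIso (ρ_ O).symm
  have hom_eq (A : C) (m : A ⟶ O) : m = (ρ_ A).inv ≫ A ◁ t ≫ (hAO A).to O :=
    calc m = (ρ_ A).inv ≫ m ▷ 𝟙_ C ≫ (ρ_ O).hom := by simp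
      _ = (ρ_ A).inv ≫ m ▷ 𝟙_ C ≫ O ◁ t ≫ (hAO O).to O := by
        rw [hO1.hom_ext (ρ_ O).hom]
      _ = (ρ_ A).inv ≫ A ◁ t ≫ (m ▷ O ≫ (hAO O).to O) := by
        rw [whisker_exchange_assoc]
      _ = (ρ_ A).inv ≫ A ◁ t ≫ (hAO A).to O := by
        rw [(hAO A).hom_ext (m ▷ O ≫ _)]
  exact ⟨fun Y => ⟨⟨⟨hO.to Y⟩, fun _ => hO.hom_ext _ _⟩⟩, fun A => ⟨⟨⟨_⟩, hom_eq A⟩⟩⟩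

def isColimitCofanWhiskerLeft (Q : C) [(tensorLeft Q).IsLeftAdjoint] {f : ι → C} {P : C}
    {c : ∀ i, f i ⟶ P} (hc : IsColimit (Cofan.mk P c)) :
    IsColimit (Cofan.mk (Q ⊗ P) fun i => Q ◁ c i) :=
  isColimitCofanMkObjOfIsColimit (tensorLeft Q) f c hc

def isColimitCofanWhiskerRight (Q : C) [(tensorRight Q).IsLeftAdjoint] {f : ι → C} {P : C}
    {c : ∀ i, f i ⟶ P} (hc : IsColimit (Cofan.mk P c)) :
    IsColimit (Cofan.mk (P ⊗ Q) fun i => c i ▷ Q) :=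
  isColimitCofanMkObjOfIsColimit (tensorRight Q) f c hc

variable [HasZeroMorphisms C] [HasZeroObject C]

open ZeroObject

lemma whiskerLeft_zero_of_isLeftAdjoint (Q : C) [(tensorLeft Q).IsLeftAdjoint] {X Y : C} :
    Q ◁ (0 : X ⟶ Y) = 0 := by
  rw [← zero_comp (X := X) (Y := 0) (f := 0), MonoidalCategory.whiskerLeft_comp,
    ((isZero_zero C).isInitial.isInitialObj (tensorLeft Q)).hom_ext (Q ◁ 0) 0, comp_zero]

lemma zero_whiskerRight_of_isLeftAdjoint (Q : C) [(tensorRight Q).IsLeftAdjoint] {X Y : C} :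
    (0 : X ⟶ Y) ▷ Q = 0 := by
  rw [← zero_comp (X := X) (Y := 0) (f := 0), comp_whiskerRight,
    ((isZero_zero C).isInitial.isInitialObj (tensorRight Q)).hom_ext (0 ▷ Q) 0, comp_zero]

end Tensor

structure FamilySummation (C : Type u) [Category.{v} C] [HasZeroMorphisms C]
    (ι : Type*) [DecidableEq ι] where
  sum {X Y : C} : (ι → (X ⟶ Y)) → (X ⟶ Y)
  sum_comp {X Y Y' : C} (m : ι → (X ⟶ Y)) (b : Y ⟶ Y') : sum m ≫ b = sum (fun i => m i ≫ b)
  comp_sum {X X' Y : C} (a : X' ⟶ X) (m : ι → (X ⟶ Y)) : a ≫ sum m = sum (fun i => a ≫ m i)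
  sum_single {X Y : C} (k : ι) (g : X ⟶ Y) : sum (Pi.single k g) = g

namespace FamilySummation

variable {C : Type u} [Category.{v} C] [HasZeroMorphisms C] {ι : Type*} [DecidableEq ι]
  (S : FamilySummation C ι)

lemma sum_eq_apply {X Y : C} (m : ι → (X ⟶ Y)) (k : ι) (hm : ∀ i, i ≠ k → m i = 0) :
    S.sum m = m k := by
  conv_lhs => rw [show m = Pi.single k (m k) from funext fun i => by
    by_cases hik : i = k
    · subst hik; simp
    · simp [hik, hm i hik]]
  exact S.sum_single k (m k)

lemma sum_π_ι {f : ι → C} {b : Bicone f} (hb : IsColimit b.toCocone) :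
    S.sum (fun i => b.π i ≫ b.ι i) = 𝟙 b.pt := by
  refine hb.hom_ext fun ⟨j⟩ => ?_
  change b.ι j ≫ _ = b.ι j ≫ _
  rw [S.comp_sum, Category.comp_id,
    S.sum_eq_apply _ j fun i hij => by rw [bicone_ι_π_ne_assoc _ (Ne.symm hij), zero_comp],
    bicone_ι_π_self_assoc]

def isBilimit {f : ι → C} {b : Bicone f} (hb : IsColimit b.toCocone) : b.IsBilimit where
  isColimit := hb
  isLimit := Fan.IsLimit.mk _ (fun s => (S.sum fun i => s.proj i ≫ b.ι i : s.pt ⟶ b.pt))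
    (fun s k => by
      show (S.sum fun i => s.proj i ≫ b.ι i) ≫ b.π k = s.proj k
      rw [S.sum_comp, S.sum_eq_apply _ k fun i hik => by simp [bicone_ι_π_ne _ hik],
        Category.assoc, bicone_ι_π_self, Category.comp_id])
    (fun s (m : s.pt ⟶ b.pt) (hm : ∀ j, m ≫ b.π j = s.proj j) => by
      rw [← Category.comp_id m, ← S.sum_π_ι hb, S.comp_sum]
      simp_rw [← Category.assoc, ← hm]
      rfl)

end FamilySummation

section Duality

variable {C : Type u} [Category.{v} C] [MonoidalCategory C]

def dualCopoint (W : C) {V : C} [ExactPairing W V] (u : 𝟙_ C ⟶ V) : W ⟶ 𝟙_ C :=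
  (λ_ W).inv ≫ u ▷ W ≫ ε_ W V

lemma coevaluation_comp_dualCopoint (W : C) {V : C} [ExactPairing W V] (u : 𝟙_ C ⟶ V) :
    η_ W V ≫ dualCopoint W u ▷ V ≫ (λ_ V).hom = u :=
  calc η_ W V ≫ dualCopoint W u ▷ V ≫ (λ_ V).hom
      = 𝟙 _ ⊗≫ (𝟙_ C ◁ η_ W V ≫ u ▷ (W ⊗ V)) ⊗≫ ε_ W V ▷ V ⊗≫ 𝟙 _ := by
        simp only [dualCopoint]; monoidal
    _ = 𝟙 _ ⊗≫ (u ▷ 𝟙_ C ≫ V ◁ η_ W V) ⊗≫ ε_ W V ▷ V ⊗≫ 𝟙 _ := by rw [whisker_exchange]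
    _ = 𝟙 _ ⊗≫ u ⊗≫ (V ◁ η_ W V ≫ (α_ V W V).inv ≫ ε_ W V ▷ V) ⊗≫ 𝟙 _ := by monoidal
    _ = u := by rw [ExactPairing.coevaluation_evaluation]; monoidal

lemma coevaluation_whiskerLeft_comp_dualCopoint (W : C) {V : C} [ExactPairing W V]
    (u : 𝟙_ C ⟶ V) (p : V ⟶ 𝟙_ C) :
    η_ W V ≫ W ◁ p ≫ (ρ_ W).hom ≫ dualCopoint W u = u ≫ p :=
  calc η_ W V ≫ W ◁ p ≫ (ρ_ W).hom ≫ dualCopoint W u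
      = η_ W V ≫ (W ◁ p ≫ dualCopoint W u ▷ 𝟙_ C) ≫ (λ_ (𝟙_ C)).hom := by
        simp [unitors_equal]
    _ = (η_ W V ≫ dualCopoint W u ▷ V ≫ (λ_ V).hom) ≫ p := by
        rw [whisker_exchange]; simp
    _ = u ≫ p := by rw [coevaluation_comp_dualCopoint]

end Duality

section Summation

variable {C : Type u} [Category.{v} C] [MonoidalCategory C] [HasZeroMorphisms C]
  [HasZeroObject C] {ι : Type*} [DecidableEq ι]

/-- `∑ᵢ mᵢ` is `X ≅ 𝟙_ C ⊗ X ⟶ V ⊗ X ≅ ∐ᵢ X ⟶ Y`: copy `X` along `δ`, then apply `mᵢ` on the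
`i`-th summand. -/
def FamilySummation.ofDiagonal [∀ X : C, (tensorRight X).IsLeftAdjoint] {V : C}
    {ev : ι → (𝟙_ C ⟶ V)} (hV : IsColimit (Cofan.mk V ev)) (δ : 𝟙_ C ⟶ V)
    (hδ : ∀ k, δ ≫ Cofan.IsColimit.desc hV (Pi.single k (𝟙 (𝟙_ C))) = 𝟙 _) :
    FamilySummation C ι where
  sum {X _} m := (λ_ X).inv ≫ δ ▷ X ≫
    Cofan.IsColimit.desc (isColimitCofanWhiskerRight X hV) fun i => (λ_ X).hom ≫ m i
  sum_comp m b := by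
    simp only [Category.assoc]
    congr 2
    exact Cofan.IsColimit.hom_ext (isColimitCofanWhiskerRight _ hV) _ _ fun i => by simp
  comp_sum {X X' _} a m := by
    have hdesc : V ◁ a ≫ Cofan.IsColimit.desc (isColimitCofanWhiskerRight X hV)
        (fun i => (λ_ X).hom ≫ m i) =
        Cofan.IsColimit.desc (isColimitCofanWhiskerRight X' hV)
          fun i => (λ_ X').hom ≫ a ≫ m i := by
      refine Cofan.IsColimit.hom_ext (isColimitCofanWhiskerRight _ hV) _ _ fun i => ?_
      simp only [cofan_mk_inj, ← whisker_exchange_assoc]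
      simp
    rw [← hdesc, leftUnitor_inv_naturality_assoc, whisker_exchange_assoc]
  sum_single {X Y} k g := by
    have hdesc : Cofan.IsColimit.desc (isColimitCofanWhiskerRight X hV)
        (fun i => (λ_ X).hom ≫ (Pi.single k g : ι → (X ⟶ Y)) i) =
        Cofan.IsColimit.desc hV (Pi.single k (𝟙 (𝟙_ C))) ▷ X ≫ (λ_ X).hom ≫ g := by
      refine Cofan.IsColimit.hom_ext (isColimitCofanWhiskerRight _ hV) _ _ fun i => ?_
      rw [cofan_mk_inj, Cofan.IsColimit.whiskerRight_desc, ← comp_whiskerRight_assoc,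
        Cofan.IsColimit.fac_mk]
      by_cases hik : i = k
      · subst hik; simp
      · simp [hik, zero_whiskerRight_of_isLeftAdjoint]
    rw [hdesc, ← comp_whiskerRight_assoc, hδ]
    simp

/-- Morally `∑ⱼ ev j`: the coevaluation followed by the map `W ⊗ V ≅ ∐ⱼ W ⟶ V` that is
`dualCopoint W (ev j) ≫ ev j` on the `j`-th summand. -/
def unitCoproductDiagonal (W : C) {V : C} [ExactPairing W V] [(tensorLeft W).IsLeftAdjoint]
    {ev : ι → (𝟙_ C ⟶ V)} (hV : IsColimit (Cofan.mk V ev)) : 𝟙_ C ⟶ V :=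
  η_ W V ≫ Cofan.IsColimit.desc (isColimitCofanWhiskerLeft W hV)
    fun j => (ρ_ W).hom ≫ dualCopoint W (ev j) ≫ ev j

lemma unitCoproductDiagonal_comp_desc_single (W : C) {V : C} [ExactPairing W V]
    [(tensorLeft W).IsLeftAdjoint] {ev : ι → (𝟙_ C ⟶ V)} (hV : IsColimit (Cofan.mk V ev))
    (k : ι) :
    unitCoproductDiagonal W hV ≫ Cofan.IsColimit.desc hV (Pi.single k (𝟙 (𝟙_ C))) = 𝟙 _ := by
  have hp : Cofan.IsColimit.desc (isColimitCofanWhiskerLeft W hV)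
      (fun j => (ρ_ W).hom ≫ dualCopoint W (ev j) ≫ ev j) ≫
        Cofan.IsColimit.desc hV (Pi.single k (𝟙 (𝟙_ C))) =
      W ◁ Cofan.IsColimit.desc hV (Pi.single k (𝟙 (𝟙_ C))) ≫ (ρ_ W).hom ≫
        dualCopoint W (ev k) := by
    refine Cofan.IsColimit.hom_ext (isColimitCofanWhiskerLeft W hV) _ _ fun j => ?_
    rw [cofan_mk_inj, Cofan.IsColimit.whiskerLeft_desc_assoc, ← whiskerLeft_comp_assoc,
      Cofan.IsColimit.fac_mk]
    by_cases hjk : j = k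
    · subst hjk; simp
    · simp [hjk, whiskerLeft_zero_of_isLeftAdjoint]
  rw [unitCoproductDiagonal, Category.assoc, hp, coevaluation_whiskerLeft_comp_dualCopoint,
    Cofan.IsColimit.fac_mk, Pi.single_eq_same]

end Summation

end

/-- **Houston's theorem.** Every compact closed (rigid) monoidal category — one in which
every object has both a left and a right dual — possessing finite coproducts has a zero
object and finite biproducts: there is an object `Z` that is both initial and terminal,
and every finite family of objects admits a coproduct cocone whose induced projections
(`inj k ≫ p k = 𝟙`, and `inj i ≫ p k` the zero morphism through `Z` for `i ≠ k`) form a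
product cone. -/
theorem compactClosed_hasBiproducts {C : Type u} [Category.{v} C] [MonoidalCategory C]
    [HasFiniteCoproducts C]
    (hR : ∀ X : C, ∃ (Y : C) (η : 𝟙_ C ⟶ Y ⊗ X), IsRightDual X Y η)
    (hL : ∀ X : C, ∃ (Y : C) (η : 𝟙_ C ⟶ X ⊗ Y), IsLeftDual X Y η) :
    ∃ (Z : C) (hZi : IsInitial Z) (hZt : IsTerminal Z),
      ∀ (ι : Type) (_ : Finite ι) (f : ι → C),
        ∃ (A : C) (inj : ∀ i, f i ⟶ A) (p : ∀ k, A ⟶ f k),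
          Nonempty (IsColimit (Cofan.mk A inj)) ∧
          (∀ k, inj k ≫ p k = 𝟙 (f k)) ∧
          (∀ i k, i ≠ k → inj i ≫ p k = hZt.from (f i) ≫ hZi.to (f k)) ∧
          Nonempty (IsLimit (Fan.mk A p)) := by
  classical
  choose R ηR hRd using hR
  choose L ηL hLd using hL
  have (X : C) : (tensorLeft X).IsLeftAdjoint :=
    letI := (hRd X).exactPairing; (tensorLeftAdjunction (R X) X).isLeftAdjoint
  have (X : C) : (tensorRight X).IsLeftAdjoint :=
    letI := (hLd X).exactPairing; (tensorRightAdjunction X (L X)).isLeftAdjoint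
  let := (hRd (⊥_ C)).exactPairing
  have hZ : IsZero (⊥_ C) := isZero_of_isInitial_of_unit_hom initialIsInitial
    (η_ (R (⊥_ C)) (⊥_ C) ≫ (initialIsInitial.isInitialObj (tensorLeft _)).to _)
  have := hZ.hasZeroObject
  let := HasZeroObject.zeroMorphismsOfZeroObject (C := C)
  refine ⟨⊥_ C, hZ.isInitial, hZ.isTerminal, fun ι _ f => ?_⟩
  let hV := coproductIsCoproduct fun _ : ι => 𝟙_ C
  let := (hRd (∐ fun _ : ι => 𝟙_ C)).exactPairing
  let S := FamilySummation.ofDiagonal hV _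
    (unitCoproductDiagonal_comp_desc_single (R (∐ fun _ : ι => 𝟙_ C)) hV)
  let b := Bicone.ofColimitCocone (coproductIsCoproduct f)
  have hb := S.isBilimit (b := b) (coproductIsCoproduct f)
  refine ⟨b.pt, b.ι, b.π, ⟨hb.isColimit⟩, bicone_ι_π_self b, fun i k hik => ?_, ⟨hb.isLimit⟩⟩
  rw [bicone_ι_π_ne b hik, hZ.eq_zero_of_tgt (hZ.isTerminal.from _), zero_comp]
end

section
/- Let C = (C, ⊗, I) be a monoidal category with an initial object 0 such that each functor A ⊗ (−) preserves the initial object. If 0 admits a right dual, then 0 is terminal, and hence a zero object. -/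
open CategoryTheory CategoryTheory.Limits CategoryTheory.MonoidalCategory

universe v u

/-- Let `C` be a monoidal category with an initial object `O` such that each functor
`A ⊗ (−)` preserves the initial object.  If `O` admits a right dual, then `O` is
terminal (and hence, being also initial, a zero object). -/
theorem isTerminal_initial_of_rightDual {C : Type u} [Category.{v} C] [MonoidalCategory C]
    (O : C) (hO : IsInitial O)
    (hpO : ∀ A : C, IsInitial (A ⊗ O))
    (hdO : ∃ (Y : C) (η : 𝟙_ C ⟶ Y ⊗ O), IsRightDual O Y η) :
    Nonempty (IsTerminal O) := by
  obtain ⟨Y, η, hdual⟩ := hdO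
  refine ⟨IsTerminal.ofUniqueHom
    (fun A => (ρ_ A).inv ≫ (A ◁ η) ≫ (α_ A Y O).inv ≫ (hpO (A ⊗ Y)).to O)
    (fun A m => ?_)⟩
  obtain ⟨g, hg, -⟩ := hdual A (𝟙_ C) (m ≫ (λ_ O).inv)
  have hm : m = (ρ_ A).inv ≫ (A ◁ η) ≫ (α_ A Y O).inv ≫ ((g ▷ O) ≫ (λ_ O).hom) := by
    have := congrArg (· ≫ (λ_ O).hom) hg
    simpa using this
  rw [hm, (hpO (A ⊗ Y)).hom_ext ((g ▷ O) ≫ (λ_ O).hom) ((hpO (A ⊗ Y)).to O)]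
end
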